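/- arXiv:0709.0885 — 3 statements merged into one kernel-verified Lean document; each statement's English description precedes it below -/
import Mathlib

section
/- For all integers n and m with m even, 2 ≤ m ≤ n − 1, one has S_{3,0}([2^n, 2^n + 2^m)) = 3^{m/2 − 1}. -/
/-- binary digit sum -/
def sigma2 (n : ℕ) : ℕ := (Nat.digits 2 n).sum

/-- `S m l x = Σ_{0 ≤ n < x, n ≡ l (mod m)} (−1)^{σ(n)}` -/
def S (m l x : ℕ) : ℤ :=
  ∑ n ∈ (Finset.range x).filter (fun n => n % m = l), (-1 : ℤ) ^ sigma2 n

/-- `Sint m l x y = S_{m,l}([x,y)) = S_{m,l}(y) − S_{m,l}(x)` -/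
def Sint (m l x y : ℕ) : ℤ := S m l y - S m l x

/-!
Adding the leading bit `2^n` to `j < 2^n` flips the sign `(-1)^σ(j)`, so the sum over
`[2^n, 2^n + 2^m)` is `-S_{3,l'}(2^m)` for the residue `l' ≡ -2^n ≢ 0 (mod 3)`.
The four numbers `4y, …, 4y + 3` carry the signs `ε, -ε, -ε, ε` with `ε = (-1)^σ(y)` and
the residues `y, y + 1, y + 2, y` modulo 3; hence `S_{3,l}(4x) = 3 S_{3,l}(x) - S_{1,0}(x)`,
where `S_{1,0}` is the plain Thue–Morse sum. Summing over `l` gives `S_{1,0}(4x) = 0`, so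
`S_{3,l}(4^{s+1}) = 3^s S_{3,l}(4) = -3^s` for `l ≠ 0`.
-/

open Finset

lemma sigma2_two_mul (a : ℕ) : sigma2 (2 * a) = sigma2 a := by
  rcases Nat.eq_zero_or_pos a with rfl | ha
  · rfl
  · rw [sigma2, sigma2, ← zero_add (2 * a),
      Nat.digits_add 2 one_lt_two 0 a two_pos (Or.inr ha.ne'), List.sum_cons, zero_add]

lemma sigma2_two_mul_add_one (a : ℕ) : sigma2 (2 * a + 1) = sigma2 a + 1 := by
  rw [sigma2, sigma2, add_comm, Nat.digits_add 2 one_lt_two 1 a one_lt_two (Or.inl one_ne_zero),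
    List.sum_cons, add_comm]

lemma sigma2_add_two_pow {k n : ℕ} (hk : k < 2 ^ n) : sigma2 (k + 2 ^ n) = sigma2 k + 1 := by
  obtain ⟨z, hz⟩ := Nat.exists_eq_add_of_le ((Nat.digits_length_le_iff one_lt_two k).2 hk)
  have h := Nat.digits_append_zeroes_append_digits (k := z) (m := 1) (n := k) one_lt_two one_pos
  rw [← hz, mul_one] at h
  rw [sigma2, sigma2, ← h]
  simp

lemma S_succ (m l x : ℕ) :
    S m l (x + 1) = S m l x + if x % m = l then (-1) ^ sigma2 x else 0 := by
  rw [S, S, sum_filter, sum_filter, sum_range_succ]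

lemma S_one_zero_succ (x : ℕ) : S 1 0 (x + 1) = S 1 0 x + (-1) ^ sigma2 x := by
  rw [S_succ, Nat.mod_one, if_pos rfl]

lemma sum_S_three (x : ℕ) : ∑ l ∈ range 3, S 3 l x = S 1 0 x := by
  simp only [S, Nat.mod_one, filter_true]
  exact sum_fiberwise_of_maps_to (fun n _ ↦ mem_range.2 (Nat.mod_lt n three_pos)) _

lemma S_three_four_mul_add_four {l : ℕ} (hl : l < 3) (x : ℕ) :
    S 3 l (4 * x + 4) = S 3 l (4 * x) + 3 * (if x % 3 = l then (-1) ^ sigma2 x else 0)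
      - (-1) ^ sigma2 x := by
  have h0 : sigma2 (4 * x) = sigma2 x := by
    rw [show 4 * x = 2 * (2 * x) by ring, sigma2_two_mul, sigma2_two_mul]
  have h1 : sigma2 (4 * x + 1) = sigma2 x + 1 := by
    rw [show 4 * x + 1 = 2 * (2 * x) + 1 by ring, sigma2_two_mul_add_one, sigma2_two_mul]
  have h2 : sigma2 (4 * x + 2) = sigma2 x + 1 := by
    rw [show 4 * x + 2 = 2 * (2 * x + 1) by ring, sigma2_two_mul, sigma2_two_mul_add_one]
  have h3 : sigma2 (4 * x + 3) = sigma2 x + 2 := by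
    rw [show 4 * x + 3 = 2 * (2 * x + 1) + 1 by ring, sigma2_two_mul_add_one,
      sigma2_two_mul_add_one]
  simp only [S_succ, h0, h1, h2, h3, pow_succ]
  have hx : x % 3 < 3 := Nat.mod_lt x three_pos
  interval_cases l <;> interval_cases hr : x % 3 <;> simp [Nat.add_mod, Nat.mul_mod, hr] <;> ring

lemma S_three_four_mul {l : ℕ} (hl : l < 3) (x : ℕ) :
    S 3 l (4 * x) = 3 * S 3 l x - S 1 0 x := by
  induction x with
  | zero => simp [S]
  | succ x ih =>
    rw [mul_add, mul_one, S_three_four_mul_add_four hl, ih, S_succ, S_one_zero_succ]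
    ring

lemma S_one_zero_four_mul (x : ℕ) : S 1 0 (4 * x) = 0 := by
  rw [← sum_S_three, sum_congr rfl fun l hl ↦ S_three_four_mul (mem_range.1 hl) x,
    sum_sub_distrib, ← mul_sum, sum_S_three, sum_const, card_range]
  ring

lemma S_three_four_pow {l : ℕ} (hl0 : l ≠ 0) (hl : l < 3) (s : ℕ) :
    S 3 l (4 ^ (s + 1)) = -3 ^ s := by
  induction s with
  | zero =>
    have hS : S 3 l 1 = 0 := by simp [S, sum_filter, Ne.symm hl0]
    rw [zero_add, pow_one, ← mul_one 4, S_three_four_mul hl, hS]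
    simp [S, sum_filter, sigma2]
  | succ s ih =>
    rw [pow_succ', S_three_four_mul hl, ih, pow_succ', S_one_zero_four_mul]
    ring

lemma Sint_two_pow_add {m l l' n k : ℕ} (hl' : l' < m) (h : (2 ^ n + l') % m = l)
    (hk : k ≤ 2 ^ n) : Sint m l (2 ^ n) (2 ^ n + k) = -S m l' k := by
  simp only [Sint, S, sum_filter, sum_range_add, add_sub_cancel_left, ← sum_neg_distrib]
  refine sum_congr rfl fun j hj ↦ ?_
  have hres : (2 ^ n + j) % m = l ↔ j % m = l' := by
    have := (Nat.ModEq.refl (2 ^ n)).add_iff_left (n := m) (c := j) (d := l')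
    rwa [Nat.ModEq, Nat.ModEq, h, Nat.mod_eq_of_lt hl'] at this
  rw [add_comm (2 ^ n) j, sigma2_add_two_pow ((mem_range.1 hj).trans_le hk), pow_succ,
    add_comm j]
  simp only [hres, apply_ite Neg.neg, neg_zero, mul_neg_one]

theorem stmt_1 (n m : ℕ) (hm : Even m) (h2 : 2 ≤ m) (hn : m ≤ n - 1) :
    Sint 3 0 (2 ^ n) (2 ^ n + 2 ^ m) = 3 ^ (m / 2 - 1) := by
  obtain ⟨s, rfl⟩ := hm
  have hres : 2 ^ n % 3 ≠ 0 := fun h ↦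
    absurd (Nat.prime_three.dvd_of_dvd_pow (Nat.dvd_of_mod_eq_zero h)) (by norm_num)
  have hk : 2 ^ (s + s) ≤ 2 ^ n := Nat.pow_le_pow_right two_pos (by omega)
  have h4 : 2 ^ (s + s) = 4 ^ (s - 1 + 1) := by
    rw [Nat.sub_add_cancel (by omega), ← two_mul, pow_mul]; norm_num
  rw [Sint_two_pow_add (l' := 3 - 2 ^ n % 3) (by omega) (by omega) hk, h4,
    S_three_four_pow (by omega) (by omega), neg_neg, show (s + s) / 2 - 1 = s - 1 by omega]
end

section
/- For all odd integers n and m with 1 ≤ m ≤ n − 2, one has S_{3,0}([2^n, 2^n + 2^m)) = 3^{(m−1)/2}. -/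
/-!
Adding `2 ^ n` to `j < 2 ^ n` adds one binary digit, so it flips the sign `(-1) ^ σ`; hence the
part of `S_{3,l}` on `[2 ^ n, 2 ^ n + x)` is `-S_{3,l'}(x)` for the residue `l'` with
`2 ^ n + l' ≡ l (mod 3)`. Applied with `x = 2 ^ n` this gives a linear recursion for the vector
`(S_{3,l}(2 ^ m))_l`, whose solution at odd `m = 2k + 1` is `(3 ^ k, -3 ^ k, 0)`. For odd `n`,
`2 ^ n ≡ 2 (mod 3)`, so the interval sum in question is `-S_{3,1}(2 ^ m) = 3 ^ k`.
-/

lemma sigma2_two_pow_add {n j : ℕ} (hj : j < 2 ^ n) : sigma2 (2 ^ n + j) = sigma2 j + 1 := by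
  have hlen : (Nat.digits 2 j).length ≤ n := (Nat.digits_length_le_iff one_lt_two j).mpr hj
  have hdigits := Nat.digits_append_zeroes_append_digits (b := 2) (k := n - (Nat.digits 2 j).length)
    (m := 1) (n := j) one_lt_two one_pos
  rw [Nat.add_sub_cancel' hlen, mul_one] at hdigits
  rw [sigma2, add_comm, ← hdigits]
  simp [sigma2]

lemma S_two_pow_add (k l l' : ℕ) {n x : ℕ} (hx : x ≤ 2 ^ n)
    (hl : ∀ j, (2 ^ n + j) % k = l ↔ j % k = l') :
    S k l (2 ^ n + x) = S k l (2 ^ n) - S k l' x := by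
  have hshift : ∀ j ∈ Finset.range x,
      (if (2 ^ n + j) % k = l then (-1 : ℤ) ^ sigma2 (2 ^ n + j) else 0)
        = -(if j % k = l' then (-1 : ℤ) ^ sigma2 j else 0) := by
    intro j hj
    rw [sigma2_two_pow_add (lt_of_lt_of_le (Finset.mem_range.mp hj) hx), pow_succ,
      if_congr (hl j) rfl rfl]
    split_ifs <;> ring
  simp only [S, Finset.sum_filter, Finset.sum_range_add, Finset.sum_congr rfl hshift,
    Finset.sum_neg_distrib, sub_eq_add_neg]

lemma S_three_two_pow_succ {m r : ℕ} (hr : 2 ^ m % 3 = r) (l : ℕ) (hl : l < 3) :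
    S 3 l (2 ^ (m + 1)) = S 3 l (2 ^ m) - S 3 ((l + 2 * r) % 3) (2 ^ m) := by
  rw [pow_succ, mul_two]
  exact S_two_pow_add 3 l _ le_rfl fun j => by omega

lemma two_pow_odd_mod_three {n : ℕ} (hn : Odd n) : 2 ^ n % 3 = 2 := by
  obtain ⟨k, rfl⟩ := hn
  rw [pow_succ, pow_mul, Nat.mul_mod, Nat.pow_mod]
  norm_num

lemma two_pow_even_mod_three {n : ℕ} (hn : Even n) : 2 ^ n % 3 = 1 := by
  obtain ⟨k, rfl⟩ := hn
  rw [← two_mul, pow_mul, Nat.pow_mod]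
  norm_num

lemma S_three_two_pow_odd (k : ℕ) :
    S 3 0 (2 ^ (2 * k + 1)) = 3 ^ k ∧ S 3 1 (2 ^ (2 * k + 1)) = -3 ^ k ∧
      S 3 2 (2 ^ (2 * k + 1)) = 0 := by
  induction k with
  | zero => simp [S, Finset.sum_filter, Finset.sum_range_succ, sigma2]
  | succ k ih =>
    obtain ⟨h0, h1, h2⟩ := ih
    have hodd := two_pow_odd_mod_three (n := 2 * k + 1) (by simp)
    have heven := two_pow_even_mod_three (n := 2 * k + 1 + 1) (by simp [parity_simps])
    have hexp : 2 * (k + 1) + 1 = 2 * k + 1 + 1 + 1 := by ring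
    simp only [hexp, S_three_two_pow_succ heven _ (by norm_num : (0 : ℕ) < 3),
      S_three_two_pow_succ heven _ (by norm_num : (1 : ℕ) < 3),
      S_three_two_pow_succ heven _ (by norm_num : (2 : ℕ) < 3)]
    simp only [S_three_two_pow_succ hodd _ (by norm_num : (0 : ℕ) < 3),
      S_three_two_pow_succ hodd _ (by norm_num : (1 : ℕ) < 3),
      S_three_two_pow_succ hodd _ (by norm_num : (2 : ℕ) < 3), Nat.reduceMul, Nat.reduceAdd,
      Nat.reduceMod, h0, h1, h2]
    refine ⟨?_, ?_, ?_⟩ <;> ring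

theorem stmt_2_general (n m : ℕ) (hn : Odd n) (hm : Odd m) (h2 : m ≤ n - 2) :
    Sint 3 0 (2 ^ n) (2 ^ n + 2 ^ m) = 3 ^ ((m - 1) / 2) := by
  obtain ⟨k, rfl⟩ := hm
  have hx : 2 ^ (2 * k + 1) ≤ 2 ^ n := Nat.pow_le_pow_right two_pos (by omega)
  have hshift : ∀ j, (2 ^ n + j) % 3 = 0 ↔ j % 3 = 1 := by
    have := two_pow_odd_mod_three hn
    omega
  rw [Sint, S_two_pow_add 3 0 1 hx hshift, (S_three_two_pow_odd k).2.1]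
  simp

theorem stmt_2 (n m : ℕ) (hn : Odd n) (hm : Odd m) (h1 : 1 ≤ m) (h2 : m ≤ n - 2) :
    Sint 3 0 (2 ^ n) (2 ^ n + 2 ^ m) = 3 ^ ((m - 1) / 2) :=
  stmt_2_general n m hn hm h2
end

section
/- For all nonnegative integers x and y with x < y, one has S_{3,1}([x, y)) = S_{3,0}([x, y)) − S_{3,0}([2x, 2y)). -/
/-!
Split `n < 2x` by parity. An even `n = 2k` lies in the class `0 mod 3` iff `k` does, and
`σ(2k) = σ(k)`; an odd `n = 2k + 1` lies in it iff `k ≡ 1 mod 3`, and `σ(2k + 1) = σ(k) + 1`.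
Hence `S_{3,0}(2x) = S_{3,0}(x) − S_{3,1}(x)`, and the claim is the difference of this identity
at `y` and at `x`.
-/

open Finset

lemma sigma2_add_two_mul {b : ℕ} (hb : b < 2) (k : ℕ) : sigma2 (b + 2 * k) = b + sigma2 k := by
  by_cases h : b = 0 ∧ k = 0
  · obtain ⟨rfl, rfl⟩ := h
    rfl
  · simp [sigma2, Nat.digits_add 2 one_lt_two b k hb (by omega)]

lemma neg_one_pow_sigma2_add_two_mul {b : ℕ} (hb : b < 2) (k : ℕ) :
    (-1 : ℤ) ^ sigma2 (b + 2 * k) = (-1) ^ b * (-1) ^ sigma2 k := by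
  rw [sigma2_add_two_mul hb, pow_add]

lemma Finset.sum_range_two_mul {M : Type*} [AddCommMonoid M] (f : ℕ → M) (x : ℕ) :
    ∑ n ∈ range (2 * x), f n = ∑ k ∈ range x, (f (2 * k) + f (2 * k + 1)) := by
  induction x with
  | zero => simp
  | succ x ih => rw [mul_add, mul_one, sum_range_succ, sum_range_succ, ih, sum_range_succ, add_assoc]

lemma S_eq_sum_ite (m l x : ℕ) :
    S m l x = ∑ n ∈ range x, if n % m = l then (-1 : ℤ) ^ sigma2 n else 0 :=
  sum_filter _ _

lemma S_two_mul (m l x : ℕ) :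
    S m l (2 * x) = ∑ k ∈ range x,
      ((if 2 * k % m = l then (-1 : ℤ) ^ sigma2 k else 0) -
        if (2 * k + 1) % m = l then (-1 : ℤ) ^ sigma2 k else 0) := by
  rw [S_eq_sum_ite, sum_range_two_mul]
  refine sum_congr rfl fun k _ => ?_
  have h_even := neg_one_pow_sigma2_add_two_mul (b := 0) (by norm_num) k
  have h_odd := neg_one_pow_sigma2_add_two_mul (b := 1) (by norm_num) k
  rw [zero_add] at h_even
  rw [add_comm 1] at h_odd
  split_ifs <;> simp [h_even, h_odd, sub_eq_add_neg]

lemma S_three_zero_two_mul (x : ℕ) : S 3 0 (2 * x) = S 3 0 x - S 3 1 x := by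
  rw [S_two_mul, S_eq_sum_ite, S_eq_sum_ite, ← sum_sub_distrib]
  refine sum_congr rfl fun k _ => ?_
  split_ifs <;> omega

theorem stmt_10_general (x y : ℕ) :
    Sint 3 1 x y = Sint 3 0 x y - Sint 3 0 (2 * x) (2 * y) := by
  rw [Sint, Sint, Sint, S_three_zero_two_mul, S_three_zero_two_mul]
  ring

theorem stmt_10 (x y : ℕ) (hxy : x < y) :
    Sint 3 1 x y = Sint 3 0 x y - Sint 3 0 (2 * x) (2 * y) :=
  stmt_10_general x y
end
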